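/- arXiv:1708.02574 — 3 statements merged into one kernel-verified Lean document; each statement's English description precedes it below -/
import Mathlib

section
/- (Accuracy bound for the stranger approximation.) Let M be a column-stochastic n×n real matrix, let 0 < c < 1, and let q, b ∈ ℝ^n be stochastic vectors. Let T be a natural number. Define the exact stranger part r_stranger = ∑_{i=T}^{∞} c(1-c)^i M^i q and the approximate stranger part r̃_stranger = ∑_{i=T}^{∞} c(1-c)^i M^i b (both series converge). Then ‖r_stranger - r̃_stranger‖₁ ≤ 2(1-c)^T. -/
/-!
Powers of a column-stochastic matrix map stochastic vectors to stochastic vectors, and two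
stochastic vectors are at `ℓ¹` distance at most `2`. Hence the `i`-th terms of the two series
differ by at most `2c(1-c)^i` in `ℓ¹`, and the geometric tail `∑_{i ≥ T} c(1-c)^i` is `(1-c)^T`.
-/

open Finset Matrix

theorem Matrix.mulVec_mem_stdSimplex_of_mem_colStochastic {R ι : Type*} [Fintype ι]
    [DecidableEq ι] [Semiring R] [PartialOrder R] [IsOrderedRing R] {M : Matrix ι ι R}
    (hM : M ∈ colStochastic R ι) {x : ι → R} (hx : x ∈ stdSimplex R ι) :
    M *ᵥ x ∈ stdSimplex R ι :=
  ⟨nonneg_mulVec_of_mem_colStochastic hM hx.1, by rw [sum_mulVec_of_mem_colStochastic hM, hx.2]⟩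

section

variable {ι β : Type*} [Fintype ι]

theorem sum_abs_sub_le_two_of_mem_stdSimplex {x y : ι → ℝ} (hx : x ∈ stdSimplex ℝ ι)
    (hy : y ∈ stdSimplex ℝ ι) : ∑ j, |x j - y j| ≤ 2 :=
  calc ∑ j, |x j - y j| ≤ ∑ j, (x j + y j) :=
        sum_le_sum fun j _ ↦ (abs_sub _ _).trans_eq <| by rw [abs_of_nonneg (hx.1 j),
          abs_of_nonneg (hy.1 j)]
    _ = 2 := by rw [sum_add_distrib, hx.2, hy.2]; norm_num

theorem sum_abs_smul_sub_smul_le_of_mem_stdSimplex {x y : ι → ℝ} (hx : x ∈ stdSimplex ℝ ι)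
    (hy : y ∈ stdSimplex ℝ ι) {a : ℝ} (ha : 0 ≤ a) : ∑ j, |(a • x - a • y) j| ≤ 2 * a :=
  calc ∑ j, |(a • x - a • y) j| = a * ∑ j, |x j - y j| := by
        simp only [Pi.sub_apply, Pi.smul_apply, smul_eq_mul, ← mul_sub, abs_mul,
          abs_of_nonneg ha, mul_sum]
    _ ≤ 2 * a := by
        rw [mul_comm 2]
        exact mul_le_mul_of_nonneg_left (sum_abs_sub_le_two_of_mem_stdSimplex hx hy) ha

theorem summable_smul_of_mem_stdSimplex {a : β → ℝ} (ha : Summable a) {v : β → ι → ℝ}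
    (hv : ∀ i, v i ∈ stdSimplex ℝ ι) : Summable fun i ↦ a i • v i :=
  ha.abs.of_norm_bounded fun i ↦ by
    rw [norm_smul, Real.norm_eq_abs]
    exact mul_le_of_le_one_right (abs_nonneg _) (mem_closedBall_zero_iff.1
      (stdSimplex_subset_closedBall (hv i)))

theorem sum_abs_tsum_le {f : β → ι → ℝ} {g : β → ℝ} (hg : Summable g)
    (hfg : ∀ i, ∑ j, |f i j| ≤ g i) : ∑ j, |(∑' i, f i) j| ≤ ∑' i, g i := by
  have hcoord (j : ι) : Summable fun i ↦ |f i j| :=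
    hg.of_nonneg_of_le (fun _ ↦ abs_nonneg _)
      fun i ↦ (single_le_sum (fun k _ ↦ abs_nonneg (f i k)) (mem_univ j)).trans (hfg i)
  calc ∑ j, |(∑' i, f i) j| ≤ ∑ j, ∑' i, |f i j| := sum_le_sum fun j _ ↦ by
        rw [tsum_apply (Pi.summable.2 fun j ↦ (hcoord j).of_abs)]
        simpa only [Real.norm_eq_abs] using norm_tsum_le_tsum_norm (f := (f · j))
          (by simpa only [Real.norm_eq_abs] using hcoord j)
    _ = ∑' i, ∑ j, |f i j| := (Summable.tsum_finsetSum fun j _ ↦ hcoord j).symm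
    _ ≤ ∑' i, g i := (summable_sum fun j _ ↦ hcoord j).tsum_le_tsum hfg hg

end

theorem hasSum_mul_geometric_shift {c : ℝ} (hc0 : 0 < c) (hc1 : c ≤ 1) (T : ℕ) :
    HasSum (fun i : ℕ ↦ c * (1 - c) ^ (T + i)) ((1 - c) ^ T) := by
  have h := (hasSum_geometric_of_lt_one (sub_nonneg.2 hc1) (by linarith)).mul_left
    (c * (1 - c) ^ T)
  rw [sub_sub_cancel, mul_right_comm, mul_inv_cancel₀ hc0.ne', one_mul] at h
  simpa only [pow_add, mul_assoc] using h

/-- Accuracy bound for the stranger approximation: the exact stranger part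
`∑_{i≥T} c(1-c)^i M^i q` and its approximation `∑_{i≥T} c(1-c)^i M^i b` both
converge, and their difference has L1 norm at most `2(1-c)^T`. -/
theorem stranger_approx_bound {n : ℕ} (M : Matrix (Fin n) (Fin n) ℝ)
    (hMnn : ∀ i j, 0 ≤ M i j) (hMcol : ∀ j, ∑ i, M i j = 1)
    (c : ℝ) (hc0 : 0 < c) (hc1 : c < 1)
    (q : Fin n → ℝ) (hqnn : ∀ i, 0 ≤ q i) (hq1 : ∑ i, q i = 1)
    (b : Fin n → ℝ) (hbnn : ∀ i, 0 ≤ b i) (hb1 : ∑ i, b i = 1)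
    (T : ℕ) :
    Summable (fun i : ℕ => (c * (1 - c) ^ (T + i)) • (M ^ (T + i)).mulVec q) ∧
    Summable (fun i : ℕ => (c * (1 - c) ^ (T + i)) • (M ^ (T + i)).mulVec b) ∧
    ∑ j, |((∑' i : ℕ, (c * (1 - c) ^ (T + i)) • (M ^ (T + i)).mulVec q)
            - (∑' i : ℕ, (c * (1 - c) ^ (T + i)) • (M ^ (T + i)).mulVec b)) j|
      ≤ 2 * (1 - c) ^ T := by
  have hM : M ∈ colStochastic ℝ (Fin n) := mem_colStochastic_iff_sum.2 ⟨hMnn, hMcol⟩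
  have hpow {x : Fin n → ℝ} (hx : x ∈ stdSimplex ℝ (Fin n)) (k : ℕ) :
      (M ^ k) *ᵥ x ∈ stdSimplex ℝ (Fin n) :=
    mulVec_mem_stdSimplex_of_mem_colStochastic (pow_mem hM k) hx
  have hq : q ∈ stdSimplex ℝ (Fin n) := ⟨hqnn, hq1⟩
  have hb : b ∈ stdSimplex ℝ (Fin n) := ⟨hbnn, hb1⟩
  have hcoef := hasSum_mul_geometric_shift hc0 hc1.le T
  have hSq := summable_smul_of_mem_stdSimplex hcoef.summable fun i ↦ hpow hq (T + i)
  have hSb := summable_smul_of_mem_stdSimplex hcoef.summable fun i ↦ hpow hb (T + i)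
  refine ⟨hSq, hSb, ?_⟩
  rw [← hSq.tsum_sub hSb, ← hcoef.tsum_eq, ← tsum_mul_left]
  exact sum_abs_tsum_le (hcoef.summable.mul_left 2) fun i ↦
    sum_abs_smul_sub_smul_le_of_mem_stdSimplex (hpow hq _) (hpow hb _)
      (mul_nonneg hc0.le (pow_nonneg (sub_nonneg.2 hc1.le) _))
end

section
/- Let M be a column-stochastic n×n real matrix, let 0 < c < 1, and let q ∈ ℝ^n be a stochastic vector. Let S ≥ 1 and k ≥ 1 be natural numbers, set T = kS, and let f = ∑_{i=0}^{S-1} c(1-c)^i M^i q. Define r_neighbor = ∑_{i=S}^{T-1} c(1-c)^i M^i q and r̃_neighbor = (((1-c)^S - (1-c)^T)/(1 - (1-c)^S)) · f. Then r_neighbor - r̃_neighbor = ∑_{i=1}^{k-1} (1-c)^{iS} (M^{iS} f - f). -/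
lemma block_sum {n : ℕ} (M : Matrix (Fin n) (Fin n) ℝ) (c : ℝ)
    (q : Fin n → ℝ) (S : ℕ) (f : Fin n → ℝ)
    (hf : f = ∑ i ∈ Finset.range S, (c * (1 - c) ^ i) • (M ^ i).mulVec q) (a : ℕ) :
    (∑ i ∈ Finset.Ico a (a + S), (c * (1 - c) ^ i) • (M ^ i).mulVec q)
      = (1 - c) ^ a • (M ^ a).mulVec f := by
  subst hf
  rw [Finset.sum_Ico_eq_sum_range]
  simp only [add_tsub_cancel_left]
  simp only [← Matrix.mulVecLin_apply, map_sum, map_smul, Finset.smul_sum]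
  apply Finset.sum_congr rfl
  intro j _
  simp only [Matrix.mulVecLin_apply, Matrix.mulVec_mulVec, ← pow_add, smul_smul]
  ring_nf

lemma main_sum {n : ℕ} (M : Matrix (Fin n) (Fin n) ℝ) (c : ℝ)
    (q : Fin n → ℝ) (S : ℕ) (f : Fin n → ℝ)
    (hf : f = ∑ i ∈ Finset.range S, (c * (1 - c) ^ i) • (M ^ i).mulVec q) (k : ℕ) :
    (∑ i ∈ Finset.Ico S (k * S), (c * (1 - c) ^ i) • (M ^ i).mulVec q)
      = ∑ i ∈ Finset.Ico 1 k, (1 - c) ^ (i * S) • (M ^ (i * S)).mulVec f := by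
  induction k with
  | zero => simp
  | succ m ih =>
    rcases Nat.eq_zero_or_pos m with hm | hm
    · subst hm; simp
    · have h1 : S ≤ m * S := Nat.le_mul_of_pos_left S hm
      have h2 : m * S ≤ (m + 1) * S := by nlinarith
      rw [← Finset.sum_Ico_consecutive _ h1 h2, ih,
        ← Finset.sum_Ico_consecutive _ (Nat.one_le_iff_ne_zero.mpr (by omega)) (Nat.le_succ m)]
      congr 1
      have h3 : (m + 1) * S = m * S + S := by ring
      rw [h3, block_sum M c q S f hf (m * S), show Finset.Ico m (m+1) = {m} from by
        ext x; simp [Nat.lt_succ_iff, Nat.le_antisymm_iff], Finset.sum_singleton]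

/-- Error decomposition of the neighbor approximation: with `T = kS`,
`r_neighbor - r̃_neighbor = ∑_{i=1}^{k-1} (1-c)^{iS} (M^{iS} f - f)`. -/
theorem neighbor_approx_error_decomp {n : ℕ} (M : Matrix (Fin n) (Fin n) ℝ)
    (hMnn : ∀ i j, 0 ≤ M i j) (hMcol : ∀ j, ∑ i, M i j = 1)
    (c : ℝ) (hc0 : 0 < c) (hc1 : c < 1)
    (q : Fin n → ℝ) (hqnn : ∀ i, 0 ≤ q i) (hq1 : ∑ i, q i = 1)
    (S k : ℕ) (hS : 1 ≤ S) (hk : 1 ≤ k) (T : ℕ) (hT : T = k * S)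
    (f : Fin n → ℝ)
    (hf : f = ∑ i ∈ Finset.range S, (c * (1 - c) ^ i) • (M ^ i).mulVec q) :
    (∑ i ∈ Finset.Ico S T, (c * (1 - c) ^ i) • (M ^ i).mulVec q)
        - (((1 - c) ^ S - (1 - c) ^ T) / (1 - (1 - c) ^ S)) • f
      = ∑ i ∈ Finset.Ico 1 k, (1 - c) ^ (i * S) • ((M ^ (i * S)).mulVec f - f) := by
  have hx1 : (1 - c) ^ S ≠ 1 := by
    have : (1 - c) ^ S < 1 :=
      pow_lt_one₀ (by linarith) (by linarith) (by omega)
    linarith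
  have hscal : ((1 - c) ^ S - (1 - c) ^ T) / (1 - (1 - c) ^ S)
      = ∑ i ∈ Finset.Ico 1 k, (1 - c) ^ (i * S) := by
    have := geom_sum_Ico hx1 hk
    rw [hT]
    calc ((1 - c) ^ S - (1 - c) ^ (k * S)) / (1 - (1 - c) ^ S)
        = (((1 - c) ^ S) ^ k - ((1 - c) ^ S) ^ 1) / ((1 - c) ^ S - 1) := by
          rw [pow_one, mul_comm k S, pow_mul]
          rw [div_eq_div_iff (by intro h; apply hx1; linarith) (by intro h; apply hx1; linarith)]
          ring
      _ = ∑ i ∈ Finset.Ico 1 k, (1 - c) ^ (i * S) := by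
          rw [← this]
          apply Finset.sum_congr rfl
          intro i _
          rw [mul_comm i S, pow_mul]
  rw [hscal, hT, main_sum M c q S f hf k, Finset.sum_smul]
  rw [← Finset.sum_sub_distrib]
  apply Finset.sum_congr rfl
  intro i _
  rw [smul_sub]
end

section
/- (Accuracy bound for the neighbor approximation.) Let M be a column-stochastic n×n real matrix, let 0 < c < 1, and let q ∈ ℝ^n be a stochastic vector. Let S ≥ 1 and k ≥ 1 be natural numbers and set T = kS. Let f = ∑_{i=0}^{S-1} c(1-c)^i M^i q, let r_neighbor = ∑_{i=S}^{T-1} c(1-c)^i M^i q, and let r̃_neighbor = (((1-c)^S - (1-c)^T)/(1 - (1-c)^S)) · f. Then ‖r_neighbor - r̃_neighbor‖₁ ≤ 2(1-c)^S - 2(1-c)^T. -/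
lemma stoch_mulVec {n : ℕ} (M : Matrix (Fin n) (Fin n) ℝ)
    (hMnn : ∀ i j, 0 ≤ M i j) (hMcol : ∀ j, ∑ i, M i j = 1)
    (q : Fin n → ℝ) (hqnn : ∀ i, 0 ≤ q i) (hq1 : ∑ i, q i = 1) :
    (∀ i, 0 ≤ M.mulVec q i) ∧ ∑ i, M.mulVec q i = 1 := by
  constructor
  · intro i
    simp only [Matrix.mulVec, dotProduct]
    exact Finset.sum_nonneg fun j _ => mul_nonneg (hMnn i j) (hqnn j)
  · simp only [Matrix.mulVec, dotProduct]
    rw [Finset.sum_comm]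
    calc ∑ j, ∑ i, M i j * q j = ∑ j, (∑ i, M i j) * q j := by
          simp [Finset.sum_mul]
      _ = 1 := by simp [hMcol, hq1]

lemma stoch_pow_mulVec {n : ℕ} (M : Matrix (Fin n) (Fin n) ℝ)
    (hMnn : ∀ i j, 0 ≤ M i j) (hMcol : ∀ j, ∑ i, M i j = 1) (m : ℕ) :
    ∀ q : Fin n → ℝ, (∀ i, 0 ≤ q i) → ∑ i, q i = 1 →
      (∀ i, 0 ≤ (M ^ m).mulVec q i) ∧ ∑ i, (M ^ m).mulVec q i = 1 := by
  induction m with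
  | zero => intro q hqnn hq1; simp [Matrix.one_mulVec]; exact ⟨hqnn, hq1⟩
  | succ m ih =>
    intro q hqnn hq1
    have h := stoch_mulVec M hMnn hMcol q hqnn hq1
    have := ih (M.mulVec q) h.1 h.2
    rw [pow_succ, Matrix.mulVec_mulVec] at *
    exact this

/-- Accuracy bound for the neighbor approximation:
`‖r_neighbor - r̃_neighbor‖₁ ≤ 2(1-c)^S - 2(1-c)^T` where `T = kS`. -/
theorem neighbor_approx_bound {n : ℕ} (M : Matrix (Fin n) (Fin n) ℝ)
    (hMnn : ∀ i j, 0 ≤ M i j) (hMcol : ∀ j, ∑ i, M i j = 1)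
    (c : ℝ) (hc0 : 0 < c) (hc1 : c < 1)
    (q : Fin n → ℝ) (hqnn : ∀ i, 0 ≤ q i) (hq1 : ∑ i, q i = 1)
    (S k : ℕ) (hS : 1 ≤ S) (hk : 1 ≤ k) (T : ℕ) (hT : T = k * S)
    (f : Fin n → ℝ)
    (hf : f = ∑ i ∈ Finset.range S, (c * (1 - c) ^ i) • (M ^ i).mulVec q) :
    ∑ j, |((∑ i ∈ Finset.Ico S T, (c * (1 - c) ^ i) • (M ^ i).mulVec q)
            - (((1 - c) ^ S - (1 - c) ^ T) / (1 - (1 - c) ^ S)) • f) j|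
      ≤ 2 * (1 - c) ^ S - 2 * (1 - c) ^ T := by
  have hx0 : 0 < 1 - c := by linarith
  have hx1 : 1 - c < 1 := by linarith
  have hST : S ≤ T := by
    rw [hT]; calc S = 1 * S := (one_mul S).symm
      _ ≤ k * S := Nat.mul_le_mul_right S hk
  have hpowST : (1 - c) ^ T ≤ (1 - c) ^ S :=
    pow_le_pow_of_le_one (le_of_lt hx0) (le_of_lt hx1) hST
  have hpowS1 : (1 - c) ^ S < 1 := pow_lt_one₀ (le_of_lt hx0) hx1 (by omega)
  have hden : 0 < 1 - (1 - c) ^ S := by linarith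
  set ρ : ℝ := ((1 - c) ^ S - (1 - c) ^ T) / (1 - (1 - c) ^ S) with hρ
  have hρnn : 0 ≤ ρ := div_nonneg (by linarith) (le_of_lt hden)
  have hv := fun i => stoch_pow_mulVec M hMnn hMcol i q hqnn hq1
  -- sum over range m of weights
  have hgeom : ∀ m : ℕ, ∑ i ∈ Finset.range m, c * (1 - c) ^ i = 1 - (1 - c) ^ m := by
    intro m
    induction m with
    | zero => simp
    | succ m ih => rw [Finset.sum_range_succ, ih, pow_succ]; ring
  -- pointwise sum of r_neighbor over j
  have hrsum : ∑ j, (∑ i ∈ Finset.Ico S T, (c * (1 - c) ^ i) • (M ^ i).mulVec q) j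
      = (1 - c) ^ S - (1 - c) ^ T := by
    simp only [Finset.sum_apply, Pi.smul_apply, smul_eq_mul]
    rw [Finset.sum_comm]
    have : ∀ i ∈ Finset.Ico S T, ∑ j, c * (1 - c) ^ i * (M ^ i).mulVec q j
        = c * (1 - c) ^ i := by
      intro i _
      rw [← Finset.mul_sum, (hv i).2, mul_one]
    rw [Finset.sum_congr rfl this, Finset.sum_Ico_eq_sub _ hST, hgeom T, hgeom S]
    ring
  have hfsum : ∑ j, f j = 1 - (1 - c) ^ S := by
    rw [hf]
    simp only [Finset.sum_apply, Pi.smul_apply, smul_eq_mul]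
    rw [Finset.sum_comm]
    have : ∀ i ∈ Finset.range S, ∑ j, c * (1 - c) ^ i * (M ^ i).mulVec q j
        = c * (1 - c) ^ i := by
      intro i _
      rw [← Finset.mul_sum, (hv i).2, mul_one]
    rw [Finset.sum_congr rfl this, hgeom S]
  have hfnn : ∀ j, 0 ≤ f j := by
    intro j
    rw [hf]
    simp only [Finset.sum_apply, Pi.smul_apply, smul_eq_mul]
    exact Finset.sum_nonneg fun i _ => mul_nonneg
      (mul_nonneg (le_of_lt hc0) (pow_nonneg (le_of_lt hx0) i)) ((hv i).1 j)
  have hrnn : ∀ j, 0 ≤ (∑ i ∈ Finset.Ico S T, (c * (1 - c) ^ i) • (M ^ i).mulVec q) j := by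
    intro j
    simp only [Finset.sum_apply, Pi.smul_apply, smul_eq_mul]
    exact Finset.sum_nonneg fun i _ => mul_nonneg
      (mul_nonneg (le_of_lt hc0) (pow_nonneg (le_of_lt hx0) i)) ((hv i).1 j)
  calc ∑ j, |((∑ i ∈ Finset.Ico S T, (c * (1 - c) ^ i) • (M ^ i).mulVec q)
            - ρ • f) j|
      ≤ ∑ j, ((∑ i ∈ Finset.Ico S T, (c * (1 - c) ^ i) • (M ^ i).mulVec q) j
            + ρ * f j) := by
        apply Finset.sum_le_sum
        intro j _
        simp only [Pi.sub_apply, Pi.smul_apply, smul_eq_mul]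
        have h1 := hrnn j
        have h2 : 0 ≤ ρ * f j := mul_nonneg hρnn (hfnn j)
        rw [abs_sub_le_iff]; constructor <;> linarith
    _ = ((1 - c) ^ S - (1 - c) ^ T) + ρ * (1 - (1 - c) ^ S) := by
        rw [Finset.sum_add_distrib, hrsum, ← Finset.mul_sum, hfsum]
    _ = 2 * (1 - c) ^ S - 2 * (1 - c) ^ T := by
        rw [hρ, div_mul_cancel₀ _ (ne_of_gt hden)]; ring
end
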